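/- Let 0 < γ ≤ 1, ρ ∈ (0,1) and γ(1−ρ) < A < γ. Define ρ₀ : ℝ → [0,1] by ρ₀(u) = ρ for u < 0, ρ₀(u) = 1 − A/γ for 0 ≤ u < γ−A, ρ₀(u) = (u − A + γ)/(2γ) for γ−A ≤ u < A−γ+2ργ, and ρ₀(u) = ρ for u ≥ A−γ+2ργ. Then ∫_ℝ h_ρ(ρ₀(u)) du = A·log(A/(γ(1−ρ))) − A + γ(1−ρ). -/

import Mathlib

open MeasureTheory

/-- `h_ρ(z) = z log(z/ρ) + (1-z) log((1-z)/(1-ρ))` (with `0 log 0 = 0`,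
which holds automatically since `Real.log 0 = 0`). -/
noncomputable def hRho (ρ z : ℝ) : ℝ :=
  z * Real.log (z / ρ) + (1 - z) * Real.log ((1 - z) / (1 - ρ))

/-- The initial profile used in the lower bound for `γ(1-ρ) < A < γ`. -/
noncomputable def prof17 (γ ρ A u : ℝ) : ℝ :=
  if u < 0 then ρ
  else if u < γ - A then 1 - A / γ
  else if u < A - γ + 2 * ρ * γ then (u - A + γ) / (2 * γ)
  else ρ

/-!
The integrand vanishes off `[0, A - γ + 2ργ)`, since `h_ρ(ρ) = 0`. On `[0, γ - A]` the profile
is the constant `1 - A/γ`; on the ramp `[γ - A, A - γ + 2ργ]` the substitution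
`z = (u - A + γ)/(2γ)` turns the integral into `2γ ∫_{1 - A/γ}^{ρ} h_ρ`, and `h_ρ` has the
explicit primitive `G(z) = z²/2 log(z/ρ) - z²/4 - ((1-z)²/2 log((1-z)/(1-ρ)) - (1-z)²/4)`.
The sum `(γ - A) h_ρ(1 - A/γ) + 2γ (G(ρ) - G(1 - A/γ))` collapses to the claimed formula.
-/

open Real Set

lemma intervalIntegral.integral_eq_add_of_eqOn_Icc {E : Type*} [NormedAddCommGroup E]
    [NormedSpace ℝ E] [CompleteSpace E] {f g₁ g₂ : ℝ → E} {a b c : ℝ} (hab : a ≤ b) (hbc : b ≤ c)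
    (hg₁ : ContinuousOn g₁ (Icc a b)) (hg₂ : ContinuousOn g₂ (Icc b c))
    (h₁ : EqOn f g₁ (Icc a b)) (h₂ : EqOn f g₂ (Icc b c)) :
    ∫ x in a..c, f x = (∫ x in a..b, g₁ x) + ∫ x in b..c, g₂ x := by
  rw [← uIcc_of_le hab] at hg₁ h₁
  rw [← uIcc_of_le hbc] at hg₂ h₂
  rw [← intervalIntegral.integral_add_adjacent_intervals (hg₁.congr h₁).intervalIntegrable
    (hg₂.congr h₂).intervalIntegrable, intervalIntegral.integral_congr h₁,
    intervalIntegral.integral_congr h₂]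

lemma hRho_self (ρ : ℝ) : hRho ρ ρ = 0 := by
  rcases eq_or_ne ρ 0 with rfl | hρ0
  · simp [hRho]
  rcases eq_or_ne (1 - ρ) 0 with hρ1 | hρ1
  · simp [hRho, hρ1]
  simp [hRho, div_self hρ0, div_self hρ1]

section Entropy

variable {ρ : ℝ}

lemma mul_log_div_eq_sub {r : ℝ} (hr : r ≠ 0) (z : ℝ) :
    z * log (z / r) = z * log z - z * log r := by
  rcases eq_or_ne z 0 with rfl | hz
  · simp
  rw [log_div hz hr, mul_sub]

lemma continuous_hRho (hρ0 : ρ ≠ 0) (hρ1 : ρ ≠ 1) : Continuous (hRho ρ) := by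
  have h1ρ : 1 - ρ ≠ 0 := sub_ne_zero.mpr hρ1.symm
  have h : hRho ρ = fun z =>
      z * log z - z * log ρ + ((1 - z) * log (1 - z) - (1 - z) * log (1 - ρ)) :=
    funext fun z => by rw [hRho, mul_log_div_eq_sub hρ0, mul_log_div_eq_sub h1ρ]
  rw [h]
  fun_prop

lemma hasDerivAt_sq_mul_log_div {r z : ℝ} (hr : r ≠ 0) (hz : z ≠ 0) :
    HasDerivAt (fun z => z ^ 2 / 2 * (log z - log r) - z ^ 2 / 4) (z * log (z / r)) z := by
  have := (((hasDerivAt_pow 2 z).div_const 2).mul ((hasDerivAt_log hz).sub_const (log r))).sub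
    ((hasDerivAt_pow 2 z).div_const 4)
  refine this.congr_deriv ?_
  rw [log_div hz hr]
  field_simp
  ring

noncomputable def hRhoPrimitive (ρ z : ℝ) : ℝ :=
  z ^ 2 / 2 * (log z - log ρ) - z ^ 2 / 4
    - ((1 - z) ^ 2 / 2 * (log (1 - z) - log (1 - ρ)) - (1 - z) ^ 2 / 4)

lemma hasDerivAt_hRhoPrimitive (hρ0 : ρ ≠ 0) (hρ1 : ρ ≠ 1) {z : ℝ} (hz0 : z ≠ 0)
    (hz1 : z ≠ 1) :
    HasDerivAt (hRhoPrimitive ρ) (hRho ρ z) z := by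
  have h1 := hasDerivAt_sq_mul_log_div hρ0 hz0
  have h2 := (hasDerivAt_sq_mul_log_div (sub_ne_zero.mpr hρ1.symm)
    (sub_ne_zero.mpr hz1.symm)).comp z ((hasDerivAt_id z).const_sub 1)
  refine (h1.sub h2).congr_deriv ?_
  simp only [hRho]
  ring

lemma integral_hRho (hρ0 : ρ ≠ 0) (hρ1 : ρ ≠ 1) {p q : ℝ} (hp : p ∈ Ioo 0 1)
    (hq : q ∈ Ioo 0 1) :
    ∫ z in p..q, hRho ρ z = hRhoPrimitive ρ q - hRhoPrimitive ρ p := by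
  refine intervalIntegral.integral_eq_sub_of_hasDerivAt (fun z hz => ?_)
    ((continuous_hRho hρ0 hρ1).intervalIntegrable _ _)
  obtain ⟨hz0, hz1⟩ := ordConnected_Ioo.uIcc_subset hp hq hz
  exact hasDerivAt_hRhoPrimitive hρ0 hρ1 hz0.ne' hz1.ne

lemma integral_hRho_comp_sub_div (hρ0 : ρ ≠ 0) (hρ1 : ρ ≠ 1) {a b c d : ℝ} (hc : c ≠ 0)
    (ha : (a - d) / c ∈ Ioo 0 1) (hb : (b - d) / c ∈ Ioo 0 1) :
    ∫ u in a..b, hRho ρ ((u - d) / c)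
      = c * (hRhoPrimitive ρ ((b - d) / c) - hRhoPrimitive ρ ((a - d) / c)) := by
  rw [intervalIntegral.integral_comp_sub_right (fun x => hRho ρ (x / c)),
    intervalIntegral.integral_comp_div _ hc, integral_hRho hρ0 hρ1 ha hb, smul_eq_mul]

end Entropy

lemma sub_mul_hRho_add_two_mul_hRhoPrimitive_sub {γ ρ A : ℝ} (hγ : γ ≠ 0) (hA : A ≠ 0)
    (hρ0 : ρ ≠ 0) (hρ1 : ρ ≠ 1) :
    (γ - A) * hRho ρ (1 - A / γ) + 2 * γ * (hRhoPrimitive ρ ρ - hRhoPrimitive ρ (1 - A / γ))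
      = A * log (A / (γ * (1 - ρ))) - A + γ * (1 - ρ) := by
  have h1ρ : 1 - ρ ≠ 0 := sub_ne_zero.mpr hρ1.symm
  have hc : 1 - (1 - A / γ) = A / γ := by ring
  simp only [hRho, hRhoPrimitive, hc]
  rw [mul_log_div_eq_sub hρ0, mul_log_div_eq_sub h1ρ, log_div hA hγ,
    log_div hA (mul_ne_zero hγ h1ρ), log_mul hγ h1ρ]
  field_simp
  ring

section Profile

variable {γ ρ A : ℝ}

lemma prof17_of_notMem_Ico (hA1 : γ * (1 - ρ) < A) (hA2 : A < γ) {u : ℝ}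
    (hu : u ∉ Ico 0 (A - γ + 2 * ρ * γ)) : prof17 γ ρ A u = ρ := by
  rw [mem_Ico, not_and_or, not_le, not_lt] at hu
  rcases hu with hu | hu
  · rw [prof17, if_pos hu]
  · rw [prof17, if_neg (by linarith), if_neg (by linarith), if_neg (by linarith)]

lemma integral_hRho_prof17 (hA1 : γ * (1 - ρ) < A) (hA2 : A < γ) :
    ∫ u, hRho ρ (prof17 γ ρ A u) = ∫ u in 0..A - γ + 2 * ρ * γ, hRho ρ (prof17 γ ρ A u) := by
  rw [intervalIntegral.integral_of_le (by linarith), ← integral_Ico_eq_integral_Ioc,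
    setIntegral_eq_integral_of_forall_compl_eq_zero]
  intro u hu
  rw [prof17_of_notMem_Ico hA1 hA2 hu, hRho_self]

lemma eqOn_prof17_Icc_left (hγ0 : 0 < γ) (hA1 : γ * (1 - ρ) < A) :
    EqOn (prof17 γ ρ A) (fun _ => 1 - A / γ) (Icc 0 (γ - A)) := by
  intro u hu
  rw [prof17, if_neg (not_lt.mpr hu.1)]
  rcases hu.2.lt_or_eq with hu2 | rfl
  · rw [if_pos hu2]
  · rw [if_neg (lt_irrefl _), if_pos (by linarith)]
    field_simp
    ring

lemma eqOn_prof17_Icc_right (hγ0 : 0 < γ) (hA2 : A < γ) :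
    EqOn (prof17 γ ρ A) (fun u => (u - (A - γ)) / (2 * γ))
      (Icc (γ - A) (A - γ + 2 * ρ * γ)) := by
  intro u hu
  rw [prof17, if_neg (by linarith [hu.1]), if_neg (not_lt.mpr hu.1)]
  rcases hu.2.lt_or_eq with hu2 | rfl
  · rw [if_pos hu2]
    ring
  · rw [if_neg (lt_irrefl _)]
    field_simp
    ring

end Profile

theorem stmt17_general (γ ρ A : ℝ) (hγ0 : 0 < γ)
    (hρ0 : 0 < ρ) (hρ1 : ρ < 1) (hA1 : γ * (1 - ρ) < A) (hA2 : A < γ) :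
    ∫ u : ℝ, hRho ρ (prof17 γ ρ A u)
      = A * Real.log (A / (γ * (1 - ρ))) - A + γ * (1 - ρ) := by
  have hA0 : 0 < A := (mul_pos hγ0 (sub_pos.mpr hρ1)).trans hA1
  have hleft : EqOn (fun u => hRho ρ (prof17 γ ρ A u)) (fun _ => hRho ρ (1 - A / γ)) _ :=
    fun u hu => congrArg (hRho ρ) (eqOn_prof17_Icc_left hγ0 hA1 hu)
  have hright : EqOn (fun u => hRho ρ (prof17 γ ρ A u))
      (fun u => hRho ρ ((u - (A - γ)) / (2 * γ))) _ :=
    fun u hu => congrArg (hRho ρ) (eqOn_prof17_Icc_right hγ0 hA2 hu)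
  have hb : ((γ - A) - (A - γ)) / (2 * γ) = 1 - A / γ := by field_simp; ring
  have hM : (A - γ + 2 * ρ * γ - (A - γ)) / (2 * γ) = ρ := by field_simp; ring
  have hbIoo : 1 - A / γ ∈ Ioo 0 1 :=
    ⟨by rw [sub_pos, div_lt_one hγ0]; exact hA2, sub_lt_self _ (by positivity)⟩
  have hcont := continuous_hRho hρ0.ne' hρ1.ne
  rw [integral_hRho_prof17 hA1 hA2,
    intervalIntegral.integral_eq_add_of_eqOn_Icc (by linarith) (by linarith) continuousOn_const
      (by fun_prop) hleft hright,
    intervalIntegral.integral_const, smul_eq_mul, sub_zero,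
    integral_hRho_comp_sub_div hρ0.ne' hρ1.ne (by positivity) (by rw [hb]; exact hbIoo)
      (by rw [hM]; exact ⟨hρ0, hρ1⟩),
    hb, hM]
  exact sub_mul_hRho_add_two_mul_hRhoPrimitive_sub hγ0.ne' hA0.ne' hρ0.ne' hρ1.ne

/-- The relative entropy cost of the profile `prof17` is
`A log(A/(γ(1-ρ))) - A + γ(1-ρ)`. -/
theorem stmt17 (γ ρ A : ℝ) (hγ0 : 0 < γ) (hγ1 : γ ≤ 1)
    (hρ0 : 0 < ρ) (hρ1 : ρ < 1) (hA1 : γ * (1 - ρ) < A) (hA2 : A < γ) :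
    ∫ u : ℝ, hRho ρ (prof17 γ ρ A u)
      = A * Real.log (A / (γ * (1 - ρ))) - A + γ * (1 - ρ) :=
  stmt17_general γ ρ A hγ0 hρ0 hρ1 hA1 hA2
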